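/- The farthest-first traversal algorithm for k-center gives a 2-approximation: if T is the clustering returned by farthest-first traversal on a finite metric space and T° is the optimal k-center clustering, then cost(T°) ≤ cost(T) ≤ 2·cost(T°), where cost of a clustering is the maximum distance from a point to its assigned center. -/

import Mathlib

/-!
Let `x₀` be a point realising the cost `r` of the farthest-first centers `z`. By the
farthest-first rule, `z 0, …, z (k-1), x₀` are `k + 1` points at pairwise distance at least
`r`. Two of them share a nearest optimal center, so the triangle inequality through it gives
`r ≤ 2 * cost zo`.
-/

/-- The k-center cost of a family of centers `w` on a finite metric space:
the maximum over points of the distance to the nearest center. -/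
noncomputable def kCenterCost {X : Type*} [MetricSpace X] [Fintype X] {k : ℕ}
    (w : Fin k → X) : ℝ :=
  ⨆ x : X, ⨅ j : Fin k, dist x (w j)

namespace KCenter

variable {X : Type*} [MetricSpace X] {k : ℕ}

def IsFarthestFirst (z : Fin k → X) : Prop :=
  ∀ i : Fin k, 0 < i.val → ∀ x : X,
    (⨅ j : {j : Fin k // j < i}, dist x (z j.1)) ≤ ⨅ j : {j : Fin k // j < i}, dist (z i) (z j.1)

theorem IsFarthestFirst.iInf_dist_le_dist {z : Fin k → X} (hz : IsFarthestFirst z) (x : X)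
    {i₁ i₂ : Fin k} (h : i₁ < i₂) :
    ⨅ j, dist x (z j) ≤ dist (z i₂) (z i₁) := by
  have : Nonempty {j : Fin k // j < i₂} := ⟨⟨i₁, h⟩⟩
  calc ⨅ j, dist x (z j)
      ≤ ⨅ j : {j : Fin k // j < i₂}, dist x (z j.1) :=
        le_ciInf fun j => Finite.ciInf_le (fun j => dist x (z j)) j.1
    _ ≤ ⨅ j : {j : Fin k // j < i₂}, dist (z i₂) (z j.1) :=
        hz i₂ (Nat.zero_le _ |>.trans_lt h) x
    _ ≤ dist (z i₂) (z i₁) :=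
        Finite.ciInf_le (fun j : {j // j < i₂} => dist (z i₂) (z j.1)) ⟨i₁, h⟩

variable [Fintype X]

theorem iInf_dist_le_kCenterCost (w : Fin k → X) (x : X) :
    ⨅ j, dist x (w j) ≤ kCenterCost w :=
  Finite.le_ciSup (fun x => ⨅ j, dist x (w j)) x

theorem exists_dist_le_kCenterCost (hk : 0 < k) (w : Fin k → X) (x : X) :
    ∃ j, dist x (w j) ≤ kCenterCost w := by
  have : Nonempty (Fin k) := ⟨⟨0, hk⟩⟩
  obtain ⟨j, hj⟩ := exists_eq_ciInf_of_finite (f := fun j => dist x (w j))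
  exact ⟨j, hj ▸ iInf_dist_le_kCenterCost w x⟩

theorem exists_kCenterCost_eq [Nonempty X] (w : Fin k → X) :
    ∃ x, kCenterCost w = ⨅ j, dist x (w j) :=
  (exists_eq_ciSup_of_finite (f := fun x => ⨅ j, dist x (w j))).imp fun _ hx => hx.symm

theorem le_two_mul_kCenterCost_of_separated (hk : 0 < k) (p : Fin (k + 1) → X) {r : ℝ}
    (hp : ∀ a b, a < b → r ≤ dist (p a) (p b)) (w : Fin k → X) :
    r ≤ 2 * kCenterCost w := by
  choose nearest h_nearest using fun a => exists_dist_le_kCenterCost hk w (p a)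
  have h_shared : ∀ a b, a < b → nearest a = nearest b → r ≤ 2 * kCenterCost w := by
    intro a b hab h_eq
    calc r ≤ dist (p a) (p b) := hp a b hab
      _ ≤ dist (p a) (w (nearest a)) + dist (p b) (w (nearest b)) := by
        rw [h_eq]; exact dist_triangle_right _ _ _
      _ ≤ 2 * kCenterCost w := by linarith [h_nearest a, h_nearest b]
  obtain ⟨a, b, hne, h_eq⟩ := Fintype.exists_ne_map_eq_of_card_lt nearest (by simp)
  rcases hne.lt_or_gt with hab | hba
  · exact h_shared a b hab h_eq
  · exact h_shared b a hba h_eq.symm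

theorem IsFarthestFirst.kCenterCost_le_dist_snoc [Nonempty X] {z : Fin k → X}
    (hz : IsFarthestFirst z) {x₀ : X} (hx₀ : kCenterCost z = ⨅ j, dist x₀ (z j)) :
    ∀ a b : Fin (k + 1), a < b →
      kCenterCost z ≤
        dist (Fin.snoc (α := fun _ => X) z x₀ a) (Fin.snoc (α := fun _ => X) z x₀ b) := by
  intro a b hab
  induction b using Fin.lastCases with
  | last =>
    obtain ⟨a, rfl⟩ := Fin.exists_castSucc_eq.mpr (Fin.ne_last_of_lt hab)
    rw [Fin.snoc_castSucc, Fin.snoc_last, hx₀, dist_comm]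
    exact Finite.ciInf_le (fun j => dist x₀ (z j)) a
  | cast b =>
    obtain ⟨a, rfl⟩ := Fin.exists_castSucc_eq.mpr (Fin.ne_last_of_lt hab)
    rw [Fin.snoc_castSucc, Fin.snoc_castSucc, dist_comm]
    exact ciSup_le fun x => hz.iInf_dist_le_dist x (Fin.castSucc_lt_castSucc_iff.mp hab)

end KCenter

/-- Farthest-first traversal gives a 2-approximation for k-center: if `z` is
produced by farthest-first traversal (each new center is a point farthest from
the previously chosen centers) and `zo` is an optimal set of `k` centers, then
`cost zo ≤ cost z ≤ 2 * cost zo`. -/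
theorem farthest_first_two_approx {X : Type*} [MetricSpace X] [Fintype X] [Nonempty X]
    (k : ℕ) (hk : 1 ≤ k) (z zo : Fin k → X)
    (hff : ∀ i : Fin k, 0 < i.val → ∀ x : X,
      (⨅ j : {j : Fin k // j < i}, dist x (z j.1)) ≤
        ⨅ j : {j : Fin k // j < i}, dist (z i) (z j.1))
    (hopt : ∀ w : Fin k → X, kCenterCost zo ≤ kCenterCost w) :
    kCenterCost zo ≤ kCenterCost z ∧ kCenterCost z ≤ 2 * kCenterCost zo := by
  obtain ⟨x₀, hx₀⟩ := KCenter.exists_kCenterCost_eq z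
  exact ⟨hopt z, KCenter.le_two_mul_kCenterCost_of_separated hk _
    (KCenter.IsFarthestFirst.kCenterCost_le_dist_snoc hff hx₀) zo⟩
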